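/- Soundness of the repetition unfolding axiom ⟨*⟩ for Angel: For every hybrid game α and all sets of states X, Y ⊆ S, Angel's semi-competitive winning region of the repetition game satisfies ς_{α*}(X, Y) = X ∪ ς_{α ; α*}(X, Y). -/
import Mathlib


open Set

/-- Hybrid games over a variable set `V`. Terms/ODE right-hand sides are
interpreted as functions from states `V → ℝ` to `ℝ`; tests and evolution
domain constraints are sets of states. -/
inductive Game (V : Type*) where
  | assign (x : V) (e : (V → ℝ) → ℝ)
  | ode (x : V) (f : (V → ℝ) → ℝ) (Q : Set (V → ℝ))
  | test (Q : Set (V → ℝ))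
  | choice (a b : Game V)
  | seq (a b : Game V)
  | dual (a : Game V)
  | star (a : Game V)

variable {V : Type*} [DecidableEq V]

/-- `φ : ℝ → (V → ℝ)` (restricted to `[0,r]`) is a solution of `x' = f(x) & Q`
of duration `r ≥ 0`: `t ↦ φ t x` is differentiable with derivative `f (φ s)`
at each `s ∈ [0,r]`, `φ s ∈ Q` on `[0,r]`, and all other variables stay
constant along `φ`. -/
def IsSolution (x : V) (f : (V → ℝ) → ℝ) (Q : Set (V → ℝ)) (r : ℝ)
    (φ : ℝ → (V → ℝ)) : Prop :=
  0 ≤ r ∧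
  (∀ s ∈ Set.Icc 0 r, HasDerivAt (fun t => φ t x) (f (φ s)) s) ∧
  (∀ s ∈ Set.Icc 0 r, φ s ∈ Q) ∧
  (∀ s ∈ Set.Icc 0 r, ∀ y, y ≠ x → φ s y = φ 0 y)

mutual
/-- Angel's semi-competitive winning region ς_α(X,Y). -/
def angel : Game V → Set (V → ℝ) → Set (V → ℝ) → Set (V → ℝ)
  | .assign x e, X, _ => {ω | Function.update ω x (e ω) ∈ X}
  | .ode x f Q, X, _ =>
      {ω | ∃ r φ, IsSolution x f Q r φ ∧ φ 0 = ω ∧ φ r ∈ X}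
  | .test Q, X, _ => Q ∩ X
  | .choice a b, X, Y => angel a X Y ∪ angel b X Y
  | .seq a b, X, Y => angel a (angel b X Y) (demon b X Y)
  | .dual a, X, Y => demon a Y X
  | .star a, X, Y =>
      ⋂₀ {Z | X ∪ angel a Z Zᶜ ⊆ Z} ∪
      ⋂₀ {Z | (X ∩ Y) ∪ (angel a Z Z ∩ demon a Z Z) ⊆ Z}

/-- Demon's semi-competitive winning region δ_α(X,Y). -/
def demon : Game V → Set (V → ℝ) → Set (V → ℝ) → Set (V → ℝ)
  | .assign x e, _, Y => {ω | Function.update ω x (e ω) ∈ Y}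
  | .ode x f Q, X, Y =>
      {ω | ∀ r φ, IsSolution x f Q r φ → φ 0 = ω → ∀ s ∈ Set.Icc 0 r, φ s ∈ Y} ∪
      {ω | ∃ r φ, IsSolution x f Q r φ ∧ φ 0 = ω ∧ ∃ s ∈ Set.Icc 0 r, φ s ∈ X ∩ Y}
  | .test Q, _, Y => Qᶜ ∪ Y
  | .choice a b, X, Y =>
      (demon a X Y ∩ demon b X Y) ∪ (demon a X Y ∩ angel a X Y) ∪
      (demon b X Y ∩ angel b X Y)
  | .seq a b, X, Y => demon a (angel b X Y) (demon b X Y)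
  | .dual a, X, Y => angel a Y X
  | .star a, X, Y =>
      ⋃₀ {Z | Z ⊆ Y ∩ demon a Zᶜ Z} ∪
      ⋂₀ {Z | (X ∩ Y) ∪ (angel a Z Z ∩ demon a Z Z) ⊆ Z}
end

/-- Angel's one-argument zero-sum dGL winning region ς_α(X). -/
def dglAngel : Game V → Set (V → ℝ) → Set (V → ℝ)
  | .assign x e, X => {ω | Function.update ω x (e ω) ∈ X}
  | .ode x f Q, X => {ω | ∃ r φ, IsSolution x f Q r φ ∧ φ 0 = ω ∧ φ r ∈ X}
  | .test Q, X => Q ∩ X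
  | .choice a b, X => dglAngel a X ∪ dglAngel b X
  | .seq a b, X => dglAngel a (dglAngel b X)
  | .dual a, X => (dglAngel a Xᶜ)ᶜ
  | .star a, X => ⋂₀ {Z | X ∪ dglAngel a Z ⊆ Z}

/-- Demon's one-argument zero-sum dGL winning region δ_α(X) = (ς_α(Xᶜ))ᶜ. -/
def dglDemon (g : Game V) (X : Set (V → ℝ)) : Set (V → ℝ) :=
  (dglAngel g Xᶜ)ᶜ

/-- Systematization α^{-d}: removes all dual operators. -/
def Game.sys : Game V → Game V
  | .assign x e => .assign x e
  | .ode x f Q => .ode x f Q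
  | .test Q => .test Q
  | .choice a b => .choice a.sys b.sys
  | .seq a b => .seq a.sys b.sys
  | .dual a => a.sys
  | .star a => .star a.sys


section Aux
variable {V : Type*} [DecidableEq V]

lemma lfp_le {H : Set (V → ℝ) → Set (V → ℝ)} {B Z : Set (V → ℝ)}
    (h : B ∪ H Z ⊆ Z) : ⋂₀ {Z | B ∪ H Z ⊆ Z} ⊆ Z :=
  sInter_subset_of_mem h

lemma base_le_lfp {H : Set (V → ℝ) → Set (V → ℝ)} {B : Set (V → ℝ)} :
    B ⊆ ⋂₀ {Z | B ∪ H Z ⊆ Z} := fun ω hω => mem_sInter.2 fun _ hZ => hZ (Or.inl hω)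

lemma lfp_pre {H : Set (V → ℝ) → Set (V → ℝ)} (hm : Monotone H) (B : Set (V → ℝ)) :
    H (⋂₀ {Z | B ∪ H Z ⊆ Z}) ⊆ ⋂₀ {Z | B ∪ H Z ⊆ Z} := by
  intro ω hω
  exact mem_sInter.2 fun Z hZ => hZ (Or.inr (hm (sInter_subset_of_mem hZ) hω))

lemma lfp_post {H : Set (V → ℝ) → Set (V → ℝ)} (hm : Monotone H) (B : Set (V → ℝ)) :
    ⋂₀ {Z | B ∪ H Z ⊆ Z} ⊆ B ∪ H (⋂₀ {Z | B ∪ H Z ⊆ Z}) :=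
  lfp_le (union_subset subset_union_left
    ((hm (union_subset base_le_lfp (lfp_pre hm B))).trans subset_union_right))

lemma dglAngel_mono (g : Game V) : Monotone (dglAngel g) := by
  induction g with
  | assign x e => exact fun X X' h ω hω => h hω
  | ode x f Q =>
      rintro X X' h ω ⟨r, φ, hs, h0, hr⟩
      exact ⟨r, φ, hs, h0, h hr⟩
  | test Q => exact fun X X' h => inter_subset_inter_right _ h
  | choice a b iha ihb => exact fun X X' h => union_subset_union (iha h) (ihb h)
  | seq a b iha ihb => exact fun X X' h => iha (ihb h)
  | dual a ih => exact fun X X' h => compl_subset_compl.2 (ih (compl_subset_compl.2 h))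
  | star a ih =>
      intro X X' h
      simp only [dglAngel]
      exact sInter_subset_sInter fun Z hZ => (union_subset_union_left _ h).trans hZ

lemma dglDemon_mono (g : Game V) : Monotone (dglDemon g) :=
  fun _ _ h => compl_subset_compl.2 (dglAngel_mono g (compl_subset_compl.2 h))

lemma dglAngel_sys_empty (g : Game V) : dglAngel g.sys (∅ : Set (V → ℝ)) = ∅ := by
  induction g with
  | assign x e => rfl
  | ode x f Q =>
      ext ω; simp [Game.sys, dglAngel]
  | test Q => simp [Game.sys, dglAngel]
  | choice a b iha ihb => simp [Game.sys, dglAngel, iha, ihb]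
  | seq a b iha ihb => simp [Game.sys, dglAngel, iha, ihb]
  | dual a ih => exact ih
  | star a ih =>
      apply subset_empty_iff.1
      refine (lfp_le ?_ : _ ⊆ (∅ : Set (V → ℝ)))
      simp [ih]

end Aux

set_option linter.unusedSectionVars false
set_option maxHeartbeats 1000000
set_option linter.unusedVariables false

section Aux2
variable {V : Type*} [DecidableEq V]

lemma IsSolution.restrict {x : V} {f : (V → ℝ) → ℝ} {Q : Set (V → ℝ)} {r : ℝ}
    {φ : ℝ → (V → ℝ)} (h : IsSolution x f Q r φ) {s : ℝ} (hs : s ∈ Set.Icc 0 r) :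
    IsSolution x f Q s φ := by
  obtain ⟨hr, hd, hq, hc⟩ := h
  have hsub : Set.Icc (0:ℝ) s ⊆ Set.Icc 0 r := Set.Icc_subset_Icc le_rfl hs.2
  exact ⟨hs.1, fun t ht => hd t (hsub ht), fun t ht => hq t (hsub ht),
    fun t ht => hc t (hsub ht)⟩

lemma union_split (g : Game V) (U W : Set (V → ℝ)) :
    dglAngel g (U ∪ W) ⊆ dglAngel g U ∪ dglAngel g.sys W := by
  induction g generalizing U W with
  | assign x e =>
      intro ω hω
      rcases hω with h | h
      · exact Or.inl h
      · exact Or.inr h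
  | ode x f Q =>
      rintro ω ⟨r, φ, hs, h0, hr⟩
      rcases hr with h | h
      · exact Or.inl ⟨r, φ, hs, h0, h⟩
      · exact Or.inr ⟨r, φ, hs, h0, h⟩
  | test Q =>
      intro ω ⟨hQ, hUW⟩
      rcases hUW with h | h
      · exact Or.inl ⟨hQ, h⟩
      · exact Or.inr ⟨hQ, h⟩
  | choice a b iha ihb =>
      intro ω hω
      rcases hω with h | h
      · rcases iha U W h with h' | h'
        · exact Or.inl (Or.inl h')
        · exact Or.inr (Or.inl h')
      · rcases ihb U W h with h' | h'
        · exact Or.inl (Or.inr h')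
        · exact Or.inr (Or.inr h')
  | seq a b iha ihb =>
      calc dglAngel a (dglAngel b (U ∪ W))
          ⊆ dglAngel a (dglAngel b U ∪ dglAngel b.sys W) := dglAngel_mono a (ihb U W)
        _ ⊆ dglAngel a (dglAngel b U) ∪ dglAngel a.sys (dglAngel b.sys W) := iha _ _
  | dual a ih =>
      intro ω hω
      by_cases hV : ω ∈ dglAngel a.sys W
      · exact Or.inr hV
      · left
        intro hc
        have h1 : dglAngel a Uᶜ ⊆ dglAngel a (Uᶜ ∩ Wᶜ) ∪ dglAngel a.sys W := by
          refine (dglAngel_mono a ?_).trans (ih _ _)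
          intro z hz
          by_cases hw : z ∈ W
          · exact Or.inr hw
          · exact Or.inl ⟨hz, hw⟩
        rcases h1 hc with h | h
        · exact hω (by rw [compl_union]; exact h)
        · exact hV h
  | star a ih =>
      show dglAngel (Game.star a) (U ∪ W) ⊆ _
      simp only [dglAngel, Game.sys]
      apply lfp_le (H := fun Z => dglAngel a Z)
      apply union_subset
      · apply union_subset_union
        · exact base_le_lfp
        · exact base_le_lfp
      · refine (ih _ _).trans (union_subset_union ?_ ?_)
        · exact lfp_pre (dglAngel_mono a) U
        · exact lfp_pre (dglAngel_mono a.sys) W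

end Aux2

section Aux3
variable {V : Type*} [DecidableEq V]

lemma consistency (g : Game V) (U W : Set (V → ℝ)) :
    dglAngel g U ∩ dglDemon g W ⊆ dglAngel g.sys (U ∩ W) := by
  induction g generalizing U W with
  | assign x e =>
      rintro ω ⟨hU, hD⟩
      exact ⟨hU, not_not.1 hD⟩
  | ode x f Q =>
      rintro ω ⟨⟨r, φ, hs, h0, hU⟩, hD⟩
      refine ⟨r, φ, hs, h0, hU, ?_⟩
      by_contra hw
      exact hD ⟨r, φ, hs, h0, hw⟩
  | test Q =>
      rintro ω ⟨⟨hQ, hU⟩, hD⟩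
      refine ⟨hQ, hU, ?_⟩
      by_contra hw
      exact hD ⟨hQ, hw⟩
  | choice a b iha ihb =>
      rintro ω ⟨hU, hD⟩
      have hDa : ω ∈ dglDemon a W := fun hc => hD (Or.inl hc)
      have hDb : ω ∈ dglDemon b W := fun hc => hD (Or.inr hc)
      rcases hU with h | h
      · exact Or.inl (iha U W ⟨h, hDa⟩)
      · exact Or.inr (ihb U W ⟨h, hDb⟩)
  | seq a b iha ihb =>
      rintro ω ⟨hU, hD⟩
      have hD' : ω ∈ dglDemon a (dglDemon b W) := by
        show ω ∉ dglAngel a (dglDemon b W)ᶜ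
        rw [dglDemon, compl_compl]
        exact hD
      exact dglAngel_mono a.sys (ihb U W) (iha _ _ ⟨hU, hD'⟩)
  | dual a ih =>
      rintro ω ⟨hU, hD⟩
      have hW : ω ∈ dglAngel a W := by
        have := not_not.1 hD
        rwa [compl_compl] at this
      have := ih W U ⟨hW, hU⟩
      rwa [inter_comm W U] at this
  | star a ih =>
      rintro ω ⟨hU, hG⟩
      have hGW : dglDemon (Game.star a) W ⊆ W := by
        rw [dglDemon]
        exact compl_subset_comm.1 (by
          simp only [dglAngel]
          exact (base_le_lfp : Wᶜ ⊆ _))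
      have hGD : dglDemon (Game.star a) W ⊆ dglDemon a (dglDemon (Game.star a) W) := by
        rw [dglDemon, dglDemon, compl_compl]
        apply compl_subset_compl.2
        simp only [dglAngel]
        exact lfp_pre (dglAngel_mono a) Wᶜ
      set G := dglDemon (Game.star a) W with hGdef
      set L' := dglAngel (Game.star a.sys) (U ∩ W) with hLdef
      have hL'base : U ∩ W ⊆ L' := by
        rw [hLdef]; simp only [dglAngel]; exact base_le_lfp
      have hL'pre : dglAngel a.sys L' ⊆ L' := by
        rw [hLdef]; simp only [dglAngel]
        exact lfp_pre (dglAngel_mono a.sys) (U ∩ W)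
      have key : dglAngel (Game.star a) U ⊆ L' ∪ Gᶜ := by
        simp only [dglAngel]
        apply lfp_le (H := fun Z => dglAngel a Z)
        apply union_subset
        · intro z hz
          by_cases hg : z ∈ G
          · exact Or.inl (hL'base ⟨hz, hGW hg⟩)
          · exact Or.inr hg
        · intro z hz
          by_cases hg : z ∈ G
          · left
            have h1 : z ∈ dglAngel a.sys ((L' ∪ Gᶜ) ∩ G) := ih _ _ ⟨hz, hGD hg⟩
            refine hL'pre (dglAngel_mono a.sys ?_ h1)
            rintro w ⟨h2 | h2, h3⟩
            · exact h2
            · exact absurd h3 h2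
          · exact Or.inr hg
      rcases key hU with h | h
      · exact h
      · exact absurd hG h

end Aux3

section Aux4
variable {V : Type*} [DecidableEq V]

lemma demon_union_split (g : Game V) (U W : Set (V → ℝ)) :
    dglDemon g (U ∪ W) ⊆ dglDemon g U ∪ dglAngel g.sys W := by
  intro ω h
  by_cases hs : ω ∈ dglAngel g.sys W
  · exact Or.inr hs
  · left
    intro hc
    have h1 : dglAngel g Uᶜ ⊆ dglAngel g (U ∪ W)ᶜ ∪ dglAngel g.sys W := by
      refine (dglAngel_mono g ?_).trans (union_split g _ _)
      intro z hz
      by_cases hw : z ∈ W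
      · exact Or.inr hw
      · rw [compl_union]; exact Or.inl ⟨hz, hw⟩
    rcases h1 hc with h2 | h2
    · exact h h2
    · exact hs h2

lemma char (g : Game V) (X Y : Set (V → ℝ)) :
    angel g X Y = dglAngel g X ∪ dglAngel g.sys (X ∩ Y) ∧
    demon g X Y = dglDemon g Y ∪ dglAngel g.sys (X ∩ Y) := by
  induction g generalizing X Y with
  | assign x e =>
      constructor
      · ext ω
        simp only [angel, dglAngel, Game.sys, mem_union, mem_setOf_eq, mem_inter_iff]
        tauto
      · ext ω
        simp only [demon, dglAngel, dglDemon, Game.sys, mem_union, mem_setOf_eq,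
          mem_inter_iff, mem_compl_iff, not_not]
        tauto
  | ode x f Q =>
      constructor
      · ext ω
        simp only [angel, dglAngel, Game.sys, mem_union, mem_setOf_eq]
        constructor
        · exact Or.inl
        · rintro (h | ⟨r, φ, hs, h0, hU, _⟩)
          · exact h
          · exact ⟨r, φ, hs, h0, hU⟩
      · ext ω
        simp only [demon, dglAngel, dglDemon, Game.sys, mem_union, mem_setOf_eq,
          mem_compl_iff, not_exists]
        constructor
        · rintro (h | ⟨r, φ, hs, h0, s, hsI, hXY⟩)
          · left
            rintro r φ ⟨hsol, h0, hr⟩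
            exact hr (h r φ hsol h0 r ⟨hsol.1, le_rfl⟩)
          · exact Or.inr ⟨s, φ, hs.restrict hsI, h0, hXY⟩
        · rintro (h | ⟨r, φ, hs, h0, hXY⟩)
          · left
            intro r φ hsol h0 s hsI
            by_contra hy
            exact h s φ ⟨hsol.restrict hsI, h0, hy⟩
          · exact Or.inr ⟨r, φ, hs, h0, r, ⟨hs.1, le_rfl⟩, hXY⟩
  | test Q =>
      constructor
      · ext ω
        simp only [angel, dglAngel, Game.sys, mem_union, mem_inter_iff]
        tauto
      · ext ω
        simp only [demon, dglAngel, dglDemon, Game.sys, mem_union, mem_inter_iff,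
          mem_compl_iff, not_and, not_not]
        tauto
  | choice a b iha ihb =>
      have ca := consistency a X Y
      have cb := consistency b X Y
      constructor
      · rw [show angel (Game.choice a b) X Y = angel a X Y ∪ angel b X Y from rfl,
          (iha X Y).1, (ihb X Y).1]
        ext ω
        simp only [dglAngel, Game.sys, mem_union]
        tauto
      · rw [show demon (Game.choice a b) X Y =
            (demon a X Y ∩ demon b X Y) ∪ (demon a X Y ∩ angel a X Y) ∪
            (demon b X Y ∩ angel b X Y) from rfl,
          (iha X Y).1, (iha X Y).2, (ihb X Y).1, (ihb X Y).2]
        ext ω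
        have hca : ω ∈ dglAngel a X → ω ∈ dglDemon a Y → ω ∈ dglAngel a.sys (X ∩ Y) :=
          fun h1 h2 => ca ⟨h1, h2⟩
        have hcb : ω ∈ dglAngel b X → ω ∈ dglDemon b Y → ω ∈ dglAngel b.sys (X ∩ Y) :=
          fun h1 h2 => cb ⟨h1, h2⟩
        simp only [dglAngel, dglDemon, Game.sys, mem_union, mem_inter_iff,
          mem_compl_iff, not_or] at *
        tauto
  | seq a b iha ihb =>
      have cb := consistency b X Y
      have hinter : (dglAngel b X ∪ dglAngel b.sys (X ∩ Y)) ∩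
          (dglDemon b Y ∪ dglAngel b.sys (X ∩ Y)) = dglAngel b.sys (X ∩ Y) := by
        apply subset_antisymm
        · rintro ω ⟨h1 | h1, h2 | h2⟩
          · exact cb ⟨h1, h2⟩
          · exact h2
          · exact h1
          · exact h1
        · exact fun ω h => ⟨Or.inr h, Or.inr h⟩
      constructor
      · rw [show angel (Game.seq a b) X Y = angel a (angel b X Y) (demon b X Y) from rfl,
          (iha _ _).1, (ihb X Y).1, (ihb X Y).2, hinter]
        apply subset_antisymm
        · apply union_subset
          · exact (union_split a _ _).trans (by
              apply union_subset_union_left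
              exact Subset.rfl)
          · intro ω h
            exact Or.inr h
        · apply union_subset
          · intro ω h
            exact Or.inl (dglAngel_mono a subset_union_left h)
          · exact fun ω h => Or.inr h
      · rw [show demon (Game.seq a b) X Y = demon a (angel b X Y) (demon b X Y) from rfl,
          (iha _ _).2, (ihb X Y).1, (ihb X Y).2, hinter,
          show dglDemon (Game.seq a b) Y = dglDemon a (dglDemon b Y) from
            (by rw [dglDemon, dglDemon, dglDemon, compl_compl]; rfl),
          show dglAngel (Game.seq a b).sys (X ∩ Y)
              = dglAngel a.sys (dglAngel b.sys (X ∩ Y)) from rfl]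
        apply subset_antisymm
        · apply union_subset
          · exact demon_union_split a _ _
          · exact fun ω h => Or.inr h
        · apply union_subset
          · intro ω h
            exact Or.inl (dglDemon_mono a subset_union_left h)
          · exact fun ω h => Or.inr h
  | dual a ih =>
      constructor
      · rw [show angel (Game.dual a) X Y = demon a Y X from rfl, (ih Y X).2,
          inter_comm Y X]
        rfl
      · rw [show demon (Game.dual a) X Y = angel a Y X from rfl, (ih Y X).1,
          inter_comm Y X]
        have : dglDemon (Game.dual a) Y = dglAngel a Y := by
          rw [dglDemon]
          show ((dglAngel a Yᶜᶜ)ᶜ)ᶜ = _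
          rw [compl_compl, compl_compl]
        rw [this]
        rfl
  | star a ih =>
      have e1 : ∀ Z : Set (V → ℝ), angel a Z Zᶜ = dglAngel a Z := fun Z => by
        rw [(ih Z Zᶜ).1, inter_compl_self, dglAngel_sys_empty, union_empty]
      have e2 : ∀ Z : Set (V → ℝ), angel a Z Z ∩ demon a Z Z = dglAngel a.sys Z := fun Z => by
        rw [(ih Z Z).1, (ih Z Z).2, inter_self]
        apply subset_antisymm
        · rintro ω ⟨h1 | h1, h2 | h2⟩
          · exact (inter_self Z) ▸ consistency a Z Z ⟨h1, h2⟩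
          · exact h2
          · exact h1
          · exact h1
        · exact fun ω h => ⟨Or.inr h, Or.inr h⟩
      have e3 : ∀ Z : Set (V → ℝ), demon a Zᶜ Z = dglDemon a Z := fun Z => by
        rw [(ih Zᶜ Z).2, compl_inter_self, dglAngel_sys_empty, union_empty]
      have hC : ⋂₀ {Z | (X ∩ Y) ∪ (angel a Z Z ∩ demon a Z Z) ⊆ Z}
          = dglAngel (Game.star a).sys (X ∩ Y) := by
        show _ = dglAngel (Game.star a.sys) (X ∩ Y)
        simp only [dglAngel]
        congr 1
        ext Z
        simp only [mem_setOf_eq, e2]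
      constructor
      · show ⋂₀ {Z | X ∪ angel a Z Zᶜ ⊆ Z} ∪ _ = _
        rw [hC]
        congr 1
        show _ = ⋂₀ {Z | X ∪ dglAngel a Z ⊆ Z}
        congr 1
        ext Z
        simp only [mem_setOf_eq, e1]
      · show ⋃₀ {Z | Z ⊆ Y ∩ demon a Zᶜ Z} ∪ _ = _
        rw [hC]
        congr 1
        have hset : {Z : Set (V → ℝ) | Z ⊆ Y ∩ demon a Zᶜ Z}
            = {Z | Z ⊆ Y ∩ dglDemon a Z} := by
          ext Z
          simp only [mem_setOf_eq, e3]
        rw [hset]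
        apply subset_antisymm
        · apply sUnion_subset
          intro Z hZ
          have hZc : dglAngel (Game.star a) Yᶜ ⊆ Zᶜ := by
            simp only [dglAngel]
            apply lfp_le (H := fun Z => dglAngel a Z)
            rintro w (hw | hw) hwZ
            · exact hw (hZ hwZ).1
            · exact (hZ hwZ).2 hw
          rw [dglDemon]
          exact subset_compl_comm.1 hZc
        · apply subset_sUnion_of_mem
          have hGW : dglDemon (Game.star a) Y ⊆ Y := by
            rw [dglDemon]
            exact compl_subset_comm.1 (by
              simp only [dglAngel]
              exact (base_le_lfp : Yᶜ ⊆ _))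
          have hGD : dglDemon (Game.star a) Y
              ⊆ dglDemon a (dglDemon (Game.star a) Y) := by
            rw [dglDemon, dglDemon, compl_compl]
            apply compl_subset_compl.2
            simp only [dglAngel]
            exact lfp_pre (dglAngel_mono a) Yᶜ
          exact subset_inter hGW hGD

end Aux4

/-- Soundness of the repetition unfolding axiom ⟨*⟩ for Angel:
`ς_{α*}(X, Y) = X ∪ ς_{α ; α*}(X, Y)`. -/
theorem repetition_unfold_angel (α : Game V) (X Y : Set (V → ℝ)) :
    angel (.star α) X Y = X ∪ angel (.seq α (.star α)) X Y := by
  set A := dglAngel (Game.star α) X with hAdef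
  set S := dglAngel (Game.star α.sys) (X ∩ Y) with hSdef
  set D := dglDemon (Game.star α) Y with hDdef
  have hA : angel (Game.star α) X Y = A ∪ S := (char (Game.star α) X Y).1
  have hDm : demon (Game.star α) X Y = D ∪ S := (char (Game.star α) X Y).2
  have hXA : X ⊆ A := by rw [hAdef]; simp only [dglAngel]; exact base_le_lfp
  have hApre : dglAngel α A ⊆ A := by
    rw [hAdef]; simp only [dglAngel]; exact lfp_pre (dglAngel_mono α) X
  have hApost : A ⊆ X ∪ dglAngel α A := by
    rw [hAdef]; simp only [dglAngel]; exact lfp_post (dglAngel_mono α) X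
  have hSbase : X ∩ Y ⊆ S := by rw [hSdef]; simp only [dglAngel]; exact base_le_lfp
  have hSpre : dglAngel α.sys S ⊆ S := by
    rw [hSdef]; simp only [dglAngel]; exact lfp_pre (dglAngel_mono α.sys) (X ∩ Y)
  have hSpost : S ⊆ (X ∩ Y) ∪ dglAngel α.sys S := by
    rw [hSdef]; simp only [dglAngel]; exact lfp_post (dglAngel_mono α.sys) (X ∩ Y)
  have hAD : A ∩ D ⊆ S := consistency (Game.star α) X Y
  have hint : (A ∪ S) ∩ (D ∪ S) ⊆ S := by
    rintro ω ⟨h1 | h1, h2 | h2⟩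
    · exact hAD ⟨h1, h2⟩
    · exact h2
    · exact h1
    · exact h1
  have hSsub : S ⊆ (A ∪ S) ∩ (D ∪ S) := fun ω h => ⟨Or.inr h, Or.inr h⟩
  rw [hA, show angel (Game.seq α (Game.star α)) X Y
      = angel α (angel (Game.star α) X Y) (demon (Game.star α) X Y) from rfl,
    hA, hDm, (char α (A ∪ S) (D ∪ S)).1]
  apply subset_antisymm
  · apply union_subset
    · refine hApost.trans (union_subset_union_right X ?_)
      exact (dglAngel_mono α subset_union_left).trans subset_union_left
    · refine hSpost.trans (union_subset_union inter_subset_left ?_)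
      exact (dglAngel_mono α.sys hSsub).trans subset_union_right
  · apply union_subset
    · exact hXA.trans subset_union_left
    · apply union_subset
      · refine (union_split α A S).trans ?_
        exact (union_subset (hApre.trans subset_union_left)
          (hSpre.trans subset_union_right))
      · exact ((dglAngel_mono α.sys hint).trans hSpre).trans subset_union_right
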